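/- Let X be a Banach space and K ⊆ X* nonempty and w*-compact. Then o_w(H^K_ε) = 1 for every ε > 0 if and only if K is norm compact. -/

import Mathlib

open NormedSpace

noncomputable def derivIter {α : Type*} (d : Set α → Set α) (K : Set α) : Ordinal → Set α :=
  fun ξ => Ordinal.limitRecOn ξ K (fun _ ih => d ih)
    (fun o _ ih => ⋂ ζ : Set.Iio o, ih ζ.1 ζ.2)

/-- The `D`-derivative of a set of finite sequences. -/
def derivD {Λ : Type*} (D : Set (Set Λ)) (H : Set (List Λ)) : Set (List Λ) :=
  {t ∈ H | ∀ U ∈ D, ∃ x ∈ U, t ++ [x] ∈ H}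

/-- The canonical basis of weak neighborhoods of `0` in `X`. -/
def weakBasis (X : Type*) [NormedAddCommGroup X] [NormedSpace ℝ X] : Set (Set X) :=
  {U | ∃ (F : Finset (StrongDual ℝ X)) (δ : ℝ), 0 < δ ∧ U = {x | ∀ f ∈ F, |f x| < δ}}

/-- The hereditary tree `H^K_ε` of finite sequences in the unit ball of `X` on which
some member of `K` is everywhere at least `ε`. -/
def HKtree {X : Type*} [NormedAddCommGroup X] [NormedSpace ℝ X]
    (K : Set (StrongDual ℝ X)) (ε : ℝ) : Set (List X) :=
  {t | (∀ x ∈ t, ‖x‖ ≤ 1) ∧ ∃ f ∈ K, ∀ x ∈ t, ε ≤ f x}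

/-- `o_D(H)`: least ordinal where the iterated `D`-derivative is empty (`0` if none). -/
noncomputable def ordD {Λ : Type*} (D : Set (Set Λ)) (H : Set (List Λ)) : Ordinal :=
  sInf {ξ | derivIter (derivD D) H ξ = ∅}

/-!
`o_w(H^K_ε) = 1` says that the root has no weakly null successors: some weak neighbourhood
`U` of `0` satisfies `g x < ε` for all `g ∈ K` and `x ∈ U` with `‖x‖ ≤ 1`. If `K` is norm
compact, `U` is cut out by a finite `ε/2`-net of `K`. Conversely, `U` contains the common
kernel `N` of finitely many functionals `fᵢ`, so `‖g|_N‖ ≤ ε` for `g ∈ K`, and by Hahn–Banach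
`g` is `ε`-close to `span {fᵢ}`. A bounded set lying `ε`-close to a finite-dimensional subspace
for every `ε` is totally bounded, and weak* compactness makes `K` bounded (uniform boundedness)
and norm closed.
-/

open Set Metric

lemma derivIter_zero {α : Type*} (d : Set α → Set α) (K : Set α) : derivIter d K 0 = K := by
  simp [derivIter, Ordinal.limitRecOn_zero]

lemma derivIter_one {α : Type*} (d : Set α → Set α) (K : Set α) : derivIter d K 1 = d K := by
  rw [derivIter, ← zero_add 1, Ordinal.limitRecOn_add_one, Ordinal.limitRecOn_zero]

lemma ordD_eq_one_iff {Λ : Type*} (D : Set (Set Λ)) {H : Set (List Λ)} (hH : H.Nonempty) :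
    ordD D H = 1 ↔ derivD D H = ∅ := by
  constructor
  · intro h
    have hS : {ξ | derivIter (derivD D) H ξ = ∅}.Nonempty := by
      by_contra hS
      rw [not_nonempty_iff_eq_empty] at hS
      rw [ordD, hS, Ordinal.sInf_empty] at h
      exact zero_ne_one h
    have hmem : derivIter (derivD D) H (ordD D H) = ∅ := csInf_mem hS
    rwa [h, derivIter_one] at hmem
  · intro h
    refine IsLeast.csInf_eq ⟨by simp [derivIter_one, h], fun ξ hξ => ?_⟩
    refine Order.one_le_iff_ne_zero.mpr ?_
    rintro rfl
    exact hH.ne_empty (by simpa [derivIter_zero] using hξ)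

section WeakDual

variable {𝕜 X : Type*} [NontriviallyNormedField 𝕜] [NormedAddCommGroup X] [NormedSpace 𝕜 X]
  {K : Set (StrongDual 𝕜 X)}

lemma isClosed_of_isCompact_image_toWeakDual (hK : IsCompact (StrongDual.toWeakDual '' K)) :
    IsClosed K := by
  rw [← preimage_image_eq K StrongDual.toWeakDual.injective]
  exact hK.isClosed.preimage Dual.toWeakDual_continuous

lemma isBounded_of_isCompact_image_toWeakDual [CompleteSpace X]
    (hK : IsCompact (StrongDual.toWeakDual '' K)) : Bornology.IsBounded K := by
  have h := WeakDual.isBounded_iff_isVonNBounded.mpr (hK.isVonNBounded (𝕜 := 𝕜))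
  rwa [← WeakDual.isBounded_toWeakDual_preimage_iff_isBounded,
    preimage_image_eq K StrongDual.toWeakDual.injective] at h

end WeakDual

lemma totallyBounded_of_forall_exists_finiteDimensional {𝕜 E : Type*} [NontriviallyNormedField 𝕜]
    [ProperSpace 𝕜] [NormedAddCommGroup E] [NormedSpace 𝕜 E] {s : Set E}
    (hs : Bornology.IsBounded s)
    (h : ∀ ε > 0, ∃ S : Submodule 𝕜 E, FiniteDimensional 𝕜 S ∧ ∀ x ∈ s, ∃ y ∈ S, ‖x - y‖ ≤ ε) :
    TotallyBounded s := by
  rw [Metric.totallyBounded_iff]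
  intro ε hε
  obtain ⟨S, hS, hsS⟩ := h (ε / 2) (by positivity)
  obtain ⟨M, hM⟩ := hs.exists_norm_le
  have := FiniteDimensional.proper 𝕜 S
  have hT : IsCompact (((↑) : S → E) '' closedBall 0 (M + ε / 2)) :=
    (isCompact_closedBall _ _).image continuous_subtype_val
  obtain ⟨t, ht, hTt⟩ := Metric.totallyBounded_iff.mp hT.totallyBounded (ε / 2) (by positivity)
  refine ⟨t, ht, fun x hx => ?_⟩
  obtain ⟨y, hyS, hxy⟩ := hsS x hx
  have hyT : y ∈ ((↑) : S → E) '' closedBall 0 (M + ε / 2) := by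
    refine ⟨⟨y, hyS⟩, ?_, rfl⟩
    rw [mem_closedBall_zero_iff, Submodule.coe_norm]
    exact (norm_le_norm_add_norm_sub x y).trans (add_le_add (hM x hx) hxy)
  obtain ⟨z, hz, hyz⟩ := mem_iUnion₂.mp (hTt hyT)
  refine mem_iUnion₂.mpr ⟨z, hz, ?_⟩
  calc dist x z ≤ dist x y + dist y z := dist_triangle x y z
    _ < ε / 2 + ε / 2 := add_lt_add_of_le_of_lt (by rwa [dist_eq_norm]) hyz
    _ = ε := add_halves ε

/-- `g` minus a Hahn–Banach extension of its restriction to the common kernel vanishes on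
that kernel, hence lies in the span of the `L i`. -/
lemma exists_mem_span_norm_sub_le {𝕜 X ι : Type*} [RCLike 𝕜] [NormedAddCommGroup X]
    [NormedSpace 𝕜 X] [Finite ι] (L : ι → StrongDual 𝕜 X) (g : StrongDual 𝕜 X) :
    ∃ e ∈ Submodule.span 𝕜 (range L),
      ‖g - e‖ ≤ ‖g.comp (⨅ i, LinearMap.ker (L i : X →ₗ[𝕜] 𝕜)).subtypeL‖ := by
  set N := ⨅ i, LinearMap.ker (L i : X →ₗ[𝕜] 𝕜)
  obtain ⟨h, hext, hnorm⟩ := exists_extension_norm_eq N (g.comp N.subtypeL)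
  refine ⟨g - h, ?_, by rw [sub_sub_cancel, hnorm]⟩
  have hker : ⨅ i, LinearMap.ker (L i : X →ₗ[𝕜] 𝕜) ≤ LinearMap.ker (g - h : X →ₗ[𝕜] 𝕜) := by
    intro x hx
    simpa [sub_eq_zero] using (hext ⟨x, hx⟩).symm
  have hspan := mem_span_of_iInf_ker_le_ker hker
  rw [range_comp' _ L] at hspan
  change _ ∈ Submodule.span 𝕜 (ContinuousLinearMap.coeLM 𝕜 '' range L) at hspan
  rw [Submodule.span_image] at hspan
  obtain ⟨e, he, hee⟩ := hspan
  have hee' : e = g - h := ContinuousLinearMap.coe_injective (by simpa using hee)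
  rwa [← hee']

section HKtree

variable {X : Type*} [NormedAddCommGroup X] [NormedSpace ℝ X] {K : Set (StrongDual ℝ X)}

lemma nil_mem_HKtree (hK : K.Nonempty) (ε : ℝ) : [] ∈ HKtree K ε :=
  let ⟨f, hf⟩ := hK
  ⟨by simp, f, hf, by simp⟩

/-- The root has the most successors, so the derivative is empty as soon as the root
is not in it. -/
lemma derivD_HKtree_eq_empty_iff (hK : K.Nonempty) {ε : ℝ} :
    derivD (weakBasis X) (HKtree K ε) = ∅ ↔
      ∃ U ∈ weakBasis X, ∀ x ∈ U, ‖x‖ ≤ 1 → ∀ g ∈ K, g x < ε := by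
  constructor
  · intro h
    have hroot : [] ∉ derivD (weakBasis X) (HKtree K ε) := h ▸ notMem_empty _
    simp only [derivD, mem_sep_iff, not_and, not_forall, not_exists] at hroot
    obtain ⟨U, hU, hUx⟩ := hroot (nil_mem_HKtree hK ε)
    refine ⟨U, hU, fun x hxU hx g hg => lt_of_not_ge fun hgx => ?_⟩
    exact hUx x hxU ⟨by simpa using hx, g, hg, by simpa using hgx⟩
  · rintro ⟨U, hU, hUK⟩
    refine eq_empty_iff_forall_notMem.mpr fun t ⟨_, ht⟩ => ?_
    obtain ⟨x, hxU, hnorm, g, hg, hgx⟩ := ht U hU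
    exact (hUK x hxU (hnorm x (by simp)) g hg).not_ge (hgx x (by simp))

lemma exists_weakBasis_forall_lt_of_totallyBounded (hK : TotallyBounded K) {ε : ℝ}
    (hε : 0 < ε) : ∃ U ∈ weakBasis X, ∀ x ∈ U, ‖x‖ ≤ 1 → ∀ g ∈ K, g x < ε := by
  obtain ⟨s, hs, hKs⟩ := Metric.totallyBounded_iff.mp hK (ε / 2) (by positivity)
  refine ⟨{x | ∀ f ∈ hs.toFinset, |f x| < ε / 2}, ⟨hs.toFinset, ε / 2, by positivity, rfl⟩,
    fun x hxU hx g hg => ?_⟩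
  obtain ⟨f, hf, hgf⟩ := mem_iUnion₂.mp (hKs hg)
  rw [mem_ball_iff_norm] at hgf
  calc g x = f x + (g - f) x := by simp
    _ ≤ |f x| + ‖g - f‖ * ‖x‖ :=
      add_le_add (le_abs_self _) ((le_abs_self _).trans ((g - f).le_opNorm x))
    _ < ε / 2 + ε / 2 * 1 :=
      add_lt_add_of_lt_of_le (hxU f (hs.mem_toFinset.mpr hf)) (by gcongr)
    _ = ε := by ring

/-- A basic weak neighbourhood of `0` contains the common kernel of finitely many
functionals; that kernel is symmetric, so `g < ε` on its unit sphere gives `|g| ≤ ε`. -/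
lemma exists_finset_norm_comp_iInf_ker_le {U : Set X} (hU : U ∈ weakBasis X) {ε : ℝ}
    (hUK : ∀ x ∈ U, ‖x‖ ≤ 1 → ∀ g ∈ K, g x < ε) :
    ∃ F : Finset (StrongDual ℝ X), ∀ g ∈ K,
      ‖g.comp (⨅ f : F, LinearMap.ker (f : X →ₗ[ℝ] ℝ)).subtypeL‖ ≤ ε := by
  obtain ⟨F, δ, hδ, rfl⟩ := hU
  refine ⟨F, fun g hg => ?_⟩
  have hker : ∀ y ∈ ⨅ f : F, LinearMap.ker (f : X →ₗ[ℝ] ℝ), ∀ f ∈ F, |f y| < δ := by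
    intro y hy f hf
    have hfy : f y = 0 := (Submodule.mem_iInf _).mp hy ⟨f, hf⟩
    simpa [hfy] using hδ
  have hε : 0 < ε := by simpa using hUK 0 (fun _ _ => by simpa using hδ) (by simp) g hg
  refine ContinuousLinearMap.opNorm_le_of_unit_norm hε.le fun y hy => ?_
  have hpos := hUK y (hker y y.2) hy.le g hg
  have hneg := hUK (-y) (hker (-y) (neg_mem y.2)) (by simpa using hy.le) g hg
  simp only [map_neg] at hneg
  simpa [Real.norm_eq_abs, abs_le] using ⟨by linarith, hpos.le⟩

end HKtree

theorem ordW_eq_one_iff_compact {X : Type*} [NormedAddCommGroup X] [NormedSpace ℝ X]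
    [CompleteSpace X] (K : Set (StrongDual ℝ X)) (hne : K.Nonempty)
    (hcomp : IsCompact ((fun f => StrongDual.toWeakDual f) '' K)) :
    (∀ ε : ℝ, 0 < ε → ordD (weakBasis X) (HKtree K ε) = 1) ↔ IsCompact K := by
  have hord : (∀ ε : ℝ, 0 < ε → ordD (weakBasis X) (HKtree K ε) = 1) ↔
      ∀ ε : ℝ, 0 < ε → ∃ U ∈ weakBasis X, ∀ x ∈ U, ‖x‖ ≤ 1 → ∀ g ∈ K, g x < ε :=
    forall₂_congr fun ε _ => by
      rw [ordD_eq_one_iff _ ⟨_, nil_mem_HKtree hne ε⟩, derivD_HKtree_eq_empty_iff hne]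
  rw [hord]
  refine ⟨fun h => ?_, fun hK ε hε => exists_weakBasis_forall_lt_of_totallyBounded
    hK.totallyBounded hε⟩
  refine isCompact_iff_totallyBounded_isComplete.mpr
    ⟨?_, (isClosed_of_isCompact_image_toWeakDual hcomp).isComplete⟩
  refine totallyBounded_of_forall_exists_finiteDimensional (𝕜 := ℝ)
    (isBounded_of_isCompact_image_toWeakDual hcomp) fun ε hε => ?_
  obtain ⟨U, hU, hUK⟩ := h ε hε
  obtain ⟨F, hF⟩ := exists_finset_norm_comp_iInf_ker_le hU hUK
  refine ⟨_, FiniteDimensional.span_of_finite ℝ (finite_range ((↑) : F → StrongDual ℝ X)),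
    fun g hg => ?_⟩
  obtain ⟨e, he, hge⟩ := exists_mem_span_norm_sub_le ((↑) : F → StrongDual ℝ X) g
  exact ⟨e, he, hge.trans (hF g hg)⟩
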